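/- For every sequential decision strategy δ = (τ,d), the Bayes risk R(δ) = c E[(τ-θ)⁺] + E[a_{0d} 1{τ<θ} + a_{μd} 1{θ≤τ<∞}] can be expressed as R(δ) = E[ Σ_{n=0}^{τ-1} c(1-Π_n^{(0)}) + 1{τ<∞} Σ_{j=1}^M 1{d=j} Σ_{i=0}^M a_{ij} Π_τ^{(i)} ]. -/

import Mathlib

/-!
The delay is `(τ - θ)⁺ = Σ_{n<τ} 1{θ ≤ n}` and the terminal loss splits along the events
`{τ = n, d = j} ∈ 𝓕_n`, so both parts of the risk are sums of integrals of nonnegative costs over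
`𝓕_n`-measurable events. On such an event a cost may be replaced by its `𝓕_n`-conditional
expectation: `c (1 - Π_n^{(0)})` for the running cost `c 1{θ ≤ n}`, and `Σ_i a_{ij} Π_n^{(i)}` for
the terminal loss `a_{X_n j}` of the state `X_n`, which is `0` before `θ` and `μ` from `θ` on.
-/

open MeasureTheory
open scoped ENNReal

theorem ENat.toENNReal_sub_natCast_eq_tsum (t : ℕ∞) (k : ℕ) :
    ((t - k : ℕ∞) : ℝ≥0∞) = ∑' n : ℕ, if (n : ℕ∞) < t ∧ k ≤ n then 1 else 0 := by
  induction t using ENat.recTopCoe with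
  | top =>
    simp only [ENat.top_sub_natCast, ENat.toENNReal_top, ENat.natCast_lt_top, true_and]
    refine (top_unique ?_).symm
    calc ⊤ = ∑' n : ℕ, if k ≤ n + k then (1 : ℝ≥0∞) else 0 := by simp
      _ ≤ _ := ENNReal.tsum_comp_le_tsum_of_injective (add_left_injective k) _
  | coe m =>
    rw [tsum_eq_sum (s := Finset.Ico k m) fun n hn => if_neg (by simpa [and_comm] using hn),
      Finset.sum_congr rfl fun n hn => if_pos (by simpa [and_comm] using hn)]
    simp [← ENat.natCast_sub]

section ConditionalExpectation

variable {Ω : Type*} {m mΩ : MeasurableSpace Ω} {μ : Measure Ω}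

theorem setLIntegral_ofReal_eq_of_ae_eq_condExp (hm : m ≤ mΩ) [SigmaFinite (μ.trim hm)]
    {f g : Ω → ℝ} (hf : Integrable f μ) (hf0 : 0 ≤ᵐ[μ] f) (hg : g =ᵐ[μ] μ[f|m])
    {s : Set Ω} (hs : MeasurableSet[m] s) :
    ∫⁻ ω in s, ENNReal.ofReal (g ω) ∂μ = ∫⁻ ω in s, ENNReal.ofReal (f ω) ∂μ := by
  calc ∫⁻ ω in s, ENNReal.ofReal (g ω) ∂μ
      = ∫⁻ ω in s, ENNReal.ofReal (μ[f|m] ω) ∂μ :=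
        lintegral_congr_ae (ae_restrict_of_ae (hg.fun_comp ENNReal.ofReal))
    _ = ENNReal.ofReal (∫ ω in s, μ[f|m] ω ∂μ) :=
        (ofReal_integral_eq_lintegral_ofReal integrable_condExp.restrict
          (ae_restrict_of_ae (condExp_nonneg hf0))).symm
    _ = ENNReal.ofReal (∫ ω in s, f ω ∂μ) := by rw [setIntegral_condExp hm hf hs]
    _ = ∫⁻ ω in s, ENNReal.ofReal (f ω) ∂μ :=
        ofReal_integral_eq_lintegral_ofReal hf.restrict (ae_restrict_of_ae hf0)

variable [IsFiniteMeasure μ]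

theorem const_mul_one_sub_ae_eq_condExp (hm : m ≤ mΩ) (c : ℝ) {f g : Ω → ℝ}
    (hf : Integrable f μ) (hg : g =ᵐ[μ] μ[f|m]) :
    (fun ω => c * (1 - g ω)) =ᵐ[μ] μ[fun ω => c * (1 - f ω)|m] := by
  have hcf : (fun ω => c * (1 - f ω)) = c • ((fun _ => 1) - f) := rfl
  have hsub := condExp_sub (integrable_const (1 : ℝ)) hf m
  rw [condExp_const hm] at hsub
  rw [hcf]
  filter_upwards [condExp_smul (μ := μ) c ((fun _ => (1 : ℝ)) - f) m, hsub, hg]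
    with ω hsmulω hsubω hgω
  simp only [Pi.smul_apply, Pi.sub_apply, smul_eq_mul] at hsmulω hsubω
  rw [hsmulω, hsubω, hgω]

theorem sum_mul_ae_eq_condExp_comp {ι : Type*} [Fintype ι] {X : Ω → ι}
    (hX : ∀ i, MeasurableSet {ω | X ω = i}) {g : ι → Ω → ℝ}
    (hg : ∀ i, g i =ᵐ[μ] μ[{ω | X ω = i}.indicator (fun _ => 1)|m]) (w : ι → ℝ) :
    (fun ω => ∑ i, w i * g i ω) =ᵐ[μ] μ[fun ω => w (X ω)|m] := by
  classical
  have hw : (fun ω => w (X ω)) = ∑ i, w i • {ω | X ω = i}.indicator (fun _ => 1) := by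
    ext ω
    simp [Set.indicator_apply]
  have hint : ∀ i ∈ Finset.univ, Integrable (w i • {ω | X ω = i}.indicator fun _ => (1 : ℝ)) μ :=
    fun i _ => ((integrable_const (1 : ℝ)).indicator (hX i)).smul (w i)
  rw [hw]
  filter_upwards [condExp_finsetSum hint m,
    Filter.eventually_all.2 fun i =>
      condExp_smul (μ := μ) (w i) ({ω | X ω = i}.indicator fun _ => (1 : ℝ)) m,
    Filter.eventually_all.2 hg]
    with ω hsumω hsmulω hgω
  simp [hsumω, Finset.sum_apply, hsmulω, hgω]

end ConditionalExpectation

section StoppingTime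

variable {Ω : Type*} {mΩ : MeasurableSpace Ω} {μ : Measure Ω} {τ : Ω → ℕ∞}

theorem aemeasurable_ite_zero {p : Ω → Prop} {_ : DecidablePred p} (hp : MeasurableSet {ω | p ω})
    {g : Ω → ℝ≥0∞} (hg : AEMeasurable g μ) : AEMeasurable (fun ω => if p ω then g ω else 0) μ := by
  convert hg.indicator hp using 2 with ω
  simp [Set.indicator_apply]

theorem lintegral_tsum_ite_lt (hτ : ∀ n : ℕ, MeasurableSet {ω | (n : ℕ∞) < τ ω})
    {g : ℕ → Ω → ℝ≥0∞} (hg : ∀ n, AEMeasurable (g n) μ) :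
    ∫⁻ ω, ∑' n : ℕ, (if (n : ℕ∞) < τ ω then g n ω else 0) ∂μ
      = ∑' n : ℕ, ∫⁻ ω in {ω | (n : ℕ∞) < τ ω}, g n ω ∂μ := by
  rw [lintegral_tsum fun n => aemeasurable_ite_zero (hτ n) (hg n)]
  refine tsum_congr fun n => ?_
  rw [← lintegral_indicator (hτ n)]
  simp only [Set.indicator_apply, Set.mem_ofPred_eq]

theorem ite_lt_top_eq_tsum_sum_indicator {ι : Type*} [Fintype ι] (d : Ω → ι)
    (g : ℕ → ι → Ω → ℝ≥0∞) (ω : Ω) :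
    (if τ ω < ⊤ then g (τ ω).toNat (d ω) ω else 0)
      = ∑' n : ℕ, ∑ j, {ω | τ ω = n ∧ d ω = j}.indicator (g n j) ω := by
  classical
  obtain h | ⟨k, h⟩ : τ ω = ⊤ ∨ ∃ k : ℕ, τ ω = k := by
    induction τ ω using ENat.recTopCoe <;> simp
  · simp [h]
  · rw [tsum_eq_single k fun n hn => by simp [h, Ne.symm hn]]
    simp [h, Set.indicator_apply]

theorem lintegral_ite_lt_top_eq_tsum_sum {ι : Type*} [Fintype ι] {d : Ω → ι}
    (hd : ∀ (n : ℕ) (j : ι), MeasurableSet {ω | τ ω = n ∧ d ω = j})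
    {g : ℕ → ι → Ω → ℝ≥0∞} (hg : ∀ n j, AEMeasurable (g n j) μ) :
    ∫⁻ ω, (if τ ω < ⊤ then g (τ ω).toNat (d ω) ω else 0) ∂μ
      = ∑' n : ℕ, ∑ j, ∫⁻ ω in {ω | τ ω = n ∧ d ω = j}, g n j ω ∂μ := by
  simp only [ite_lt_top_eq_tsum_sum_indicator d g]
  rw [lintegral_tsum fun n => Finset.aemeasurable_fun_sum _ fun j _ => (hg n j).indicator (hd n j)]
  refine tsum_congr fun n => ?_
  rw [lintegral_finsetSum' _ fun j _ => (hg n j).indicator (hd n j)]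
  exact Finset.sum_congr rfl fun j _ => lintegral_indicator (hd n j) _

variable {𝓕 : Filtration ℕ mΩ} [SigmaFiniteFiltration μ 𝓕]

theorem lintegral_tsum_ite_lt_ofReal_eq_of_ae_eq_condExp (hτ : IsStoppingTime 𝓕 τ)
    {f g : ℕ → Ω → ℝ} (hf : ∀ n, Integrable (f n) μ) (hf0 : ∀ n, 0 ≤ᵐ[μ] f n)
    (hg : ∀ n, g n =ᵐ[μ] μ[f n|𝓕 n]) :
    ∫⁻ ω, ∑' n : ℕ, (if (n : ℕ∞) < τ ω then ENNReal.ofReal (g n ω) else 0) ∂μ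
      = ∫⁻ ω, ∑' n : ℕ, (if (n : ℕ∞) < τ ω then ENNReal.ofReal (f n ω) else 0) ∂μ := by
  have hτ' : ∀ n : ℕ, MeasurableSet {ω | (n : ℕ∞) < τ ω} :=
    fun n => 𝓕.le n _ (hτ.measurableSet_gt n)
  rw [lintegral_tsum_ite_lt hτ' fun n =>
      (integrable_condExp.aemeasurable.congr (hg n).symm).ennreal_ofReal,
    lintegral_tsum_ite_lt hτ' fun n => (hf n).aemeasurable.ennreal_ofReal]
  exact tsum_congr fun n =>
    setLIntegral_ofReal_eq_of_ae_eq_condExp (𝓕.le n) (hf n) (hf0 n) (hg n) (hτ.measurableSet_gt n)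

theorem lintegral_ite_lt_top_ofReal_eq_of_ae_eq_condExp {ι : Type*} [Fintype ι] {d : Ω → ι}
    (hd : ∀ (n : ℕ) (j : ι), MeasurableSet[𝓕 n] {ω | τ ω = n ∧ d ω = j})
    {f g : ℕ → ι → Ω → ℝ} (hf : ∀ n j, Integrable (f n j) μ) (hf0 : ∀ n j, 0 ≤ᵐ[μ] f n j)
    (hg : ∀ n j, g n j =ᵐ[μ] μ[f n j|𝓕 n]) :
    ∫⁻ ω, (if τ ω < ⊤ then ENNReal.ofReal (g (τ ω).toNat (d ω) ω) else 0) ∂μ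
      = ∫⁻ ω, (if τ ω < ⊤ then ENNReal.ofReal (f (τ ω).toNat (d ω) ω) else 0) ∂μ := by
  have hd' : ∀ (n : ℕ) (j : ι), MeasurableSet {ω | τ ω = n ∧ d ω = j} :=
    fun n j => 𝓕.le n _ (hd n j)
  rw [lintegral_ite_lt_top_eq_tsum_sum hd' fun n j =>
      (integrable_condExp.aemeasurable.congr (hg n j).symm).ennreal_ofReal,
    lintegral_ite_lt_top_eq_tsum_sum hd' fun n j => (hf n j).aemeasurable.ennreal_ofReal]
  exact tsum_congr fun n => Finset.sum_congr rfl fun j _ =>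
    setLIntegral_ofReal_eq_of_ae_eq_condExp (𝓕.le n) (hf n j) (hf0 n j) (hg n j) (hd n j)

end StoppingTime

section ChangeDetection

variable {Ω : Type*} {mΩ : MeasurableSpace Ω} {M : ℕ} {θ : Ω → ℕ} {μidx : Ω → Fin (M + 1)}

/-- The state `X_n`: `Π_n^{(i)}` is the `𝓕_n`-conditional probability that
`changeState θ μidx n = i`. -/
def changeState (θ : Ω → ℕ) (μidx : Ω → Fin (M + 1)) (n : ℕ) (ω : Ω) : Fin (M + 1) :=
  if n < θ ω then 0 else μidx ω

theorem measurable_changeState (hθ : Measurable θ) (hμ : Measurable μidx) (n : ℕ) :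
    Measurable (changeState θ μidx n) :=
  Measurable.ite (hθ measurableSet_Ioi) measurable_const hμ

theorem changeState_eq_zero_iff (hμ : ∀ ω, μidx ω ≠ 0) {n : ℕ} {ω : Ω} :
    changeState θ μidx n ω = 0 ↔ n < θ ω := by
  unfold changeState; split_ifs with h <;> simp [h, hμ ω]

theorem changeState_eq_iff_of_ne_zero {i : Fin (M + 1)} (hi : i ≠ 0) {n : ℕ} {ω : Ω} :
    changeState θ μidx n ω = i ↔ θ ω ≤ n ∧ μidx ω = i := by
  unfold changeState; split_ifs with h <;> simp [h, hi.symm, Nat.not_lt.mp]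

theorem ite_lt_add_ite_le_eq_ite_changeState (x : Fin (M + 1) → ℝ≥0∞) (t : ℕ∞) (ω : Ω) :
    ((if t < θ ω then x 0 else 0) + if (θ ω : ℕ∞) ≤ t ∧ t < ⊤ then x (μidx ω) else 0)
      = if t < ⊤ then x (changeState θ μidx t.toNat ω) else 0 := by
  induction t using ENat.recTopCoe with
  | top => simp
  | coe n =>
    unfold changeState
    split_ifs <;> simp_all <;> omega

variable {μ : Measure Ω} [IsFiniteMeasure μ] {𝓕 : Filtration ℕ mΩ} {τ : Ω → ℕ∞}

theorem ofReal_mul_lintegral_delay_eq (hτ : IsStoppingTime 𝓕 τ) (hθ : Measurable θ)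
    {c : ℝ} (hc : 0 ≤ c) {π : ℕ → Ω → ℝ}
    (hπ : ∀ n : ℕ, π n =ᵐ[μ] μ[{ω | n < θ ω}.indicator (fun _ => 1)|𝓕 n]) :
    ENNReal.ofReal c * ∫⁻ ω, ((τ ω - θ ω : ℕ∞) : ℝ≥0∞) ∂μ
      = ∫⁻ ω, ∑' n : ℕ, (if (n : ℕ∞) < τ ω then ENNReal.ofReal (c * (1 - π n ω)) else 0) ∂μ := by
  have hbefore (n : ℕ) : Integrable ({ω | n < θ ω}.indicator fun _ => (1 : ℝ)) μ :=
    (integrable_const 1).indicator (hθ measurableSet_Ioi)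
  have hdelay (ω : Ω) : ENNReal.ofReal c * ((τ ω - θ ω : ℕ∞) : ℝ≥0∞)
      = ∑' n : ℕ, if (n : ℕ∞) < τ ω then
          ENNReal.ofReal (c * (1 - {ω | n < θ ω}.indicator (fun _ => 1) ω)) else 0 := by
    rw [ENat.toENNReal_sub_natCast_eq_tsum, ← ENNReal.tsum_mul_left]
    refine tsum_congr fun n => ?_
    by_cases h1 : (n : ℕ∞) < τ ω <;> by_cases h2 : n < θ ω <;> simp [h1, h2]
  rw [← lintegral_const_mul' _ _ ENNReal.ofReal_ne_top, lintegral_congr hdelay]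
  refine (lintegral_tsum_ite_lt_ofReal_eq_of_ae_eq_condExp hτ
    (fun n => ((integrable_const 1).sub (hbefore n)).const_mul c) (fun n => ?_)
    fun n => const_mul_one_sub_ae_eq_condExp (𝓕.le n) c (hbefore n) (hπ n)).symm
  exact ae_of_all _ fun ω =>
    mul_nonneg hc (sub_nonneg.2 (Set.indicator_le_self' (fun _ _ => zero_le_one) ω))

theorem lintegral_terminal_loss_eq {d : Ω → Fin (M + 1)}
    (hd : ∀ (n : ℕ) (j : Fin (M + 1)), MeasurableSet[𝓕 n] {ω | τ ω = n ∧ d ω = j})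
    (hθ : Measurable θ) (hμ : Measurable μidx) {a : Fin (M + 1) → Fin (M + 1) → ℝ}
    (ha : ∀ i j, 0 ≤ a i j) {π : ℕ → Fin (M + 1) → Ω → ℝ}
    (hπ : ∀ n i, π n i =ᵐ[μ] μ[{ω | changeState θ μidx n ω = i}.indicator (fun _ => 1)|𝓕 n]) :
    ∫⁻ ω, ((if τ ω < θ ω then ENNReal.ofReal (a 0 (d ω)) else 0)
        + if (θ ω : ℕ∞) ≤ τ ω ∧ τ ω < ⊤ then ENNReal.ofReal (a (μidx ω) (d ω)) else 0) ∂μ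
      = ∫⁻ ω, (if τ ω < ⊤ then
          ENNReal.ofReal (∑ i, a i (d ω) * π (τ ω).toNat i ω) else 0) ∂μ := by
  rw [lintegral_congr fun ω =>
    ite_lt_add_ite_le_eq_ite_changeState (fun i => ENNReal.ofReal (a i (d ω))) (τ ω) ω]
  exact (lintegral_ite_lt_top_ofReal_eq_of_ae_eq_condExp hd
    (f := fun n j ω => a (changeState θ μidx n ω) j)
    (fun n j => (Integrable.of_finite (f := fun i => a i j)).comp_measurable
      (measurable_changeState hθ hμ n))
    (fun n j => ae_of_all _ fun ω => ha _ j)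
    fun n j => sum_mul_ae_eq_condExp_comp
      (fun i => measurable_changeState hθ hμ n (measurableSet_singleton i)) (hπ n)
      fun i => a i j).symm

end ChangeDetection

theorem bayes_risk_in_terms_of_posterior
    {Ω : Type*} {mΩ : MeasurableSpace Ω} (P : Measure Ω) [IsProbabilityMeasure P]
    (𝓕 : Filtration ℕ mΩ) {M : ℕ}
    (θ : Ω → ℕ) (hθ : Measurable θ)
    (μidx : Ω → Fin (M + 1)) (hμmeas : Measurable μidx) (hμ : ∀ ω, μidx ω ≠ 0)
    (c : ℝ) (hc : 0 < c)
    (a : Fin (M + 1) → Fin (M + 1) → ℝ)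
    (ha : ∀ i j, 0 ≤ a i j)
    -- the posterior processes
    (Pi : ℕ → Fin (M + 1) → Ω → ℝ)
    (hPi0 : ∀ n : ℕ,
      Pi n 0 =ᵐ[P] P[({ω | n < θ ω}).indicator (fun _ => (1 : ℝ)) | 𝓕 n])
    (hPii : ∀ (n : ℕ) (i : Fin (M + 1)), i ≠ 0 →
      Pi n i =ᵐ[P]
        P[({ω | θ ω ≤ n ∧ μidx ω = i}).indicator (fun _ => (1 : ℝ)) | 𝓕 n])
    -- τ is a (possibly infinite) stopping time of 𝓕 and d is 𝓕_τ-measurable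
    (τ : Ω → ℕ∞) (d : Ω → Fin (M + 1)) (hd : ∀ ω, d ω ≠ 0)
    (hτ : ∀ n : ℕ, MeasurableSet[𝓕 n] {ω | τ ω ≤ (n : ℕ∞)})
    (hdmeas : ∀ (n : ℕ) (j : Fin (M + 1)),
      MeasurableSet[𝓕 n] {ω | τ ω = (n : ℕ∞) ∧ d ω = j}) :
    ENNReal.ofReal c * ∫⁻ ω, ((τ ω - (θ ω : ℕ∞)) : ℕ∞) ∂P
      + ∫⁻ ω,
          ((if τ ω < (θ ω : ℕ∞) then ENNReal.ofReal (a 0 (d ω)) else 0)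
            + if (θ ω : ℕ∞) ≤ τ ω ∧ τ ω < ⊤ then ENNReal.ofReal (a (μidx ω) (d ω))
              else 0) ∂P
    = ∫⁻ ω,
        ((∑' n : ℕ, if (n : ℕ∞) < τ ω then ENNReal.ofReal (c * (1 - Pi n 0 ω)) else 0)
          + if τ ω < ⊤ then
              ∑ j ∈ Finset.univ.filter (fun j : Fin (M + 1) => j ≠ 0),
                (if d ω = j then
                  ENNReal.ofReal (∑ i : Fin (M + 1), a i j * Pi (τ ω).toNat i ω)
                 else 0)
            else 0) ∂P := by
  have hτ_stop : IsStoppingTime 𝓕 τ := hτ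
  have hPi (n : ℕ) (i : Fin (M + 1)) :
      Pi n i =ᵐ[P] P[{ω | changeState θ μidx n ω = i}.indicator (fun _ => 1) | 𝓕 n] := by
    rcases eq_or_ne i 0 with rfl | hi
    · simpa only [changeState_eq_zero_iff hμ] using hPi0 n
    · simpa only [changeState_eq_iff_of_ne_zero hi] using hPii n i hi
  have hdecision (ω : Ω) :
      (if τ ω < ⊤ then ∑ j ∈ Finset.univ.filter (fun j : Fin (M + 1) => j ≠ 0),
          (if d ω = j then ENNReal.ofReal (∑ i, a i j * Pi (τ ω).toNat i ω) else 0) else 0)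
      = if τ ω < ⊤ then ENNReal.ofReal (∑ i, a i (d ω) * Pi (τ ω).toNat i ω) else 0 := by
    simp [Finset.sum_ite_eq, hd ω]
  have hrunning_meas : AEMeasurable (fun ω => ∑' n : ℕ,
      if (n : ℕ∞) < τ ω then ENNReal.ofReal (c * (1 - Pi n 0 ω)) else 0) P := by
    refine AEMeasurable.tsum fun n => aemeasurable_ite_zero
      (𝓕.le n _ (hτ_stop.measurableSet_gt n)) (AEMeasurable.ennreal_ofReal ?_)
    exact ((integrable_condExp.aemeasurable.congr (hPi0 n).symm).const_sub 1).const_mul c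
  rw [lintegral_add_left' hrunning_meas, lintegral_congr hdecision,
    ofReal_mul_lintegral_delay_eq hτ_stop hθ hc.le hPi0,
    lintegral_terminal_loss_eq hdmeas hθ hμmeas ha hPi]
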